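/- Let ρ(x) be the tripartite family defined by ρ(x) = (1/(2√2))·Λ₀₀₀ + x·(Λ₀₃₁ + Λ₀₃₃ + Λ₁₀₃ + Λ₁₁₁ + Λ₁₃₃ + Λ₃₀₃ + Λ₃₁₀ + Λ₃₁₃ + Λ₃₃₀ + Λ₃₃₁ − Λ₀₁₁ − Λ₀₁₃ − Λ₁₀₁ − Λ₁₁₀ − Λ₁₃₀ − Λ₃₀₁), with x real. Then ρ(x) is Hermitian with trace 1, tr(ρ(x)²) = 1/8 + 16x², its eigenvalues are 1/8 + √2·x and 1/8 − √2·x, each with multiplicity 4, and ρ(x) is positive semidefinite if and only if −1/(8√2) ≤ x ≤ 1/(8√2). Moreover all three partial transposes of ρ(x) equal ρ(x), so ρ(x) is PPT on the whole parameter range. -/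

import Mathlib

open Matrix Kronecker ComplexOrder Polynomial

noncomputable def lam : Fin 4 → Matrix (Fin 2) (Fin 2) ℂ
  | 0 => ((Real.sqrt 2 : ℂ))⁻¹ • !![1, 0; 0, 1]
  | 1 => ((Real.sqrt 2 : ℂ))⁻¹ • !![0, 1; 1, 0]
  | 2 => ((Real.sqrt 2 : ℂ))⁻¹ • !![0, -Complex.I; Complex.I, 0]
  | 3 => ((Real.sqrt 2 : ℂ))⁻¹ • !![1, 0; 0, -1]

/-- `Λ_{jkl} = λ_j ⊗ λ_k ⊗ λ_l`. -/
noncomputable def Lam3 (j k l : Fin 4) :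
    Matrix (Fin 2 × Fin 2 × Fin 2) (Fin 2 × Fin 2 × Fin 2) ℂ :=
  lam j ⊗ₖ (lam k ⊗ₖ lam l)

/-- Partial transpose on the first qubit. -/
def PT1 (ρ : Matrix (Fin 2 × Fin 2 × Fin 2) (Fin 2 × Fin 2 × Fin 2) ℂ) :
    Matrix (Fin 2 × Fin 2 × Fin 2) (Fin 2 × Fin 2 × Fin 2) ℂ :=
  Matrix.of fun p q => ρ (q.1, p.2) (p.1, q.2)

/-- Partial transpose on the second qubit. -/
def PT2 (ρ : Matrix (Fin 2 × Fin 2 × Fin 2) (Fin 2 × Fin 2 × Fin 2) ℂ) :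
    Matrix (Fin 2 × Fin 2 × Fin 2) (Fin 2 × Fin 2 × Fin 2) ℂ :=
  Matrix.of fun p q => ρ (p.1, q.2.1, p.2.2) (q.1, p.2.1, q.2.2)

/-- Partial transpose on the third qubit. -/
def PT3 (ρ : Matrix (Fin 2 × Fin 2 × Fin 2) (Fin 2 × Fin 2 × Fin 2) ℂ) :
    Matrix (Fin 2 × Fin 2 × Fin 2) (Fin 2 × Fin 2 × Fin 2) ℂ :=
  Matrix.of fun p q => ρ (p.1, p.2.1, q.2.2) (q.1, q.2.1, p.2.2)

/-- The biseparable tripartite family of Section V of the paper. -/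
noncomputable def rhoBisep (x : ℝ) :
    Matrix (Fin 2 × Fin 2 × Fin 2) (Fin 2 × Fin 2 × Fin 2) ℂ :=
  ((1 / (2 * Real.sqrt 2) : ℝ) : ℂ) • Lam3 0 0 0 +
    (x : ℂ) • (Lam3 0 3 1 + Lam3 0 3 3 + Lam3 1 0 3 + Lam3 1 1 1 + Lam3 1 3 3 +
      Lam3 3 0 3 + Lam3 3 1 0 + Lam3 3 1 3 + Lam3 3 3 0 + Lam3 3 3 1 -
      Lam3 0 1 1 - Lam3 0 1 3 - Lam3 1 0 1 - Lam3 1 1 0 - Lam3 1 3 0 - Lam3 3 0 1)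

/-!
Writing `σ₁ = pauliX`, `σ₃ = pauliZ`, every `Λ_{jkl}` in `ρ(x)` is `(2√2)⁻¹ σ_j ⊗ σ_k ⊗ σ_l`
(no `σ₂` occurs), so `ρ(x) = 1/8 + (√2 x / 4) M` for an integer matrix `M` which is symmetric,
traceless and satisfies `M² = 16`, and whose entries are invariant under each partial transpose
(a finite computation). Hence `ρ(x)` is Hermitian and annihilated by `(t - α)(t - β)`, where
`α, β = 1/8 ± √2 x`: its eigenvalues lie in `{α, β}`, and `tr ρ(x) = 1 = 4α + 4β` forces
multiplicity `4` for each. The characteristic polynomial and the positivity criterion follow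
from the spectral theorem.
-/

open Finset

namespace Matrix.IsHermitian

variable {n : Type*} [Fintype n] [DecidableEq n] {A : Matrix n n ℂ} {a b : ℝ}

theorem eigenvalues_eq_or_eq (hA : A.IsHermitian)
    (h : (A - (a : ℂ) • 1) * (A - (b : ℂ) • 1) = 0) (i : n) :
    hA.eigenvalues i = a ∨ hA.eigenvalues i = b := by
  set v := ⇑(hA.eigenvectorBasis i)
  have hv : v ≠ 0 := by simpa [v] using hA.eigenvectorBasis.orthonormal.ne_zero i
  have hAv := hA.mulVec_eigenvectorBasis i
  have key : (((hA.eigenvalues i - a) * (hA.eigenvalues i - b) : ℝ) : ℂ) • v = 0 := by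
    rw [← zero_mulVec v, ← h, ← mulVec_mulVec]
    simp only [sub_mulVec, mulVec_sub, smul_mulVec, one_mulVec, mulVec_smul, hAv, v]
    push_cast
    module
  rcases smul_eq_zero.1 key with hz | hz
  · rcases mul_eq_zero.1 (Complex.ofReal_eq_zero.1 hz) with h1 | h1
    · exact .inl (sub_eq_zero.1 h1)
    · exact .inr (sub_eq_zero.1 h1)
  · exact absurd hz hv

theorem eigenvalues_eq_ite (hA : A.IsHermitian)
    (h : (A - (a : ℂ) • 1) * (A - (b : ℂ) • 1) = 0) (i : n) :
    hA.eigenvalues i = if hA.eigenvalues i = a then a else b := by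
  split_ifs with hi
  exacts [hi, (hA.eigenvalues_eq_or_eq h i).resolve_left hi]

theorem trace_eq_card_mul_add_card_mul (hA : A.IsHermitian)
    (h : (A - (a : ℂ) • 1) * (A - (b : ℂ) • 1) = 0) :
    A.trace = #{i | hA.eigenvalues i = a} * a + #{i | hA.eigenvalues i ≠ a} * b := by
  rw [hA.trace_eq_sum_eigenvalues,
    sum_congr rfl fun i _ => congrArg _ (hA.eigenvalues_eq_ite h i)]
  simp [apply_ite, sum_ite]

theorem charpoly_eq_pow_mul_pow (hA : A.IsHermitian)
    (h : (A - (a : ℂ) • 1) * (A - (b : ℂ) • 1) = 0) :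
    A.charpoly = (X - C (a : ℂ)) ^ #{i | hA.eigenvalues i = a} *
      (X - C (b : ℂ)) ^ #{i | hA.eigenvalues i ≠ a} := by
  rw [hA.charpoly_eq,
    prod_congr rfl fun i _ => congrArg (X - C ·) (congrArg _ (hA.eigenvalues_eq_ite h i))]
  simp [apply_ite, prod_ite]

theorem card_eigenvalues_eq_and_ne (hA : A.IsHermitian)
    (h : (A - (a : ℂ) • 1) * (A - (b : ℂ) • 1) = 0) (hab : a ≠ b) {k l : ℕ}
    (hkl : k + l = Fintype.card n) (htr : A.trace = k * a + l * b) :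
    #{i | hA.eigenvalues i = a} = k ∧ #{i | hA.eigenvalues i ≠ a} = l := by
  set r := #{i | hA.eigenvalues i = a}
  set s := #{i | hA.eigenvalues i ≠ a}
  have hrs : r + s = k + l := (card_filter_add_card_filter_not _).trans hkl.symm
  have hrs' : (r + s : ℝ) = k + l := by exact_mod_cast hrs
  have htr' : (r * a + s * b : ℝ) = k * a + l * b := by
    exact_mod_cast (hA.trace_eq_card_mul_add_card_mul h).symm.trans htr
  have hr : (r : ℝ) = k := by
    have : (a - b) * (r - k) = 0 := by linear_combination htr' - b * hrs'
    exact sub_eq_zero.1 ((mul_eq_zero.1 this).resolve_left (sub_ne_zero.2 hab))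
  have hr' : r = k := by exact_mod_cast hr
  omega

theorem charpoly_eq_of_mul_eq_zero (hA : A.IsHermitian)
    (h : (A - (a : ℂ) • 1) * (A - (b : ℂ) • 1) = 0) {k l : ℕ}
    (hkl : k + l = Fintype.card n) (htr : A.trace = k * a + l * b) :
    A.charpoly = (X - C (a : ℂ)) ^ k * (X - C (b : ℂ)) ^ l := by
  rw [hA.charpoly_eq_pow_mul_pow h]
  rcases eq_or_ne a b with rfl | hab
  · rw [← pow_add, ← pow_add, card_filter_add_card_filter_not, card_univ, hkl]
  · obtain ⟨hk, hl⟩ := hA.card_eigenvalues_eq_and_ne h hab hkl htr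
    rw [hk, hl]

theorem posSemidef_iff_of_mul_eq_zero (hA : A.IsHermitian)
    (h : (A - (a : ℂ) • 1) * (A - (b : ℂ) • 1) = 0) {k l : ℕ}
    (hkl : k + l = Fintype.card n) (htr : A.trace = k * a + l * b) (hk : 0 < k) (hl : 0 < l) :
    A.PosSemidef ↔ 0 ≤ a ∧ 0 ≤ b := by
  obtain ⟨i, hi, j, hj⟩ : ∃ i, hA.eigenvalues i = a ∧ ∃ j, hA.eigenvalues j = b := by
    rcases eq_or_ne a b with rfl | hab
    · obtain ⟨i⟩ : Nonempty n := Fintype.card_pos_iff.1 (by omega)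
      have hi := hA.eigenvalues_eq_or_eq h i
      rw [or_self] at hi
      exact ⟨i, hi, i, hi⟩
    · obtain ⟨hk', hl'⟩ := hA.card_eigenvalues_eq_and_ne h hab hkl htr
      obtain ⟨i, hi⟩ := card_pos.1 (hk'.symm ▸ hk)
      obtain ⟨j, hj⟩ := card_pos.1 (hl'.symm ▸ hl)
      simp only [mem_filter, mem_univ, true_and] at hi hj
      exact ⟨i, hi, j, (hA.eigenvalues_eq_or_eq h j).resolve_left hj⟩
  rw [hA.posSemidef_iff_eigenvalues_nonneg]
  refine ⟨fun hnn => ⟨hi ▸ hnn i, hj ▸ hnn j⟩, fun ⟨ha, hb⟩ m => ?_⟩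
  rcases hA.eigenvalues_eq_or_eq h m with hm | hm
  · exact hm ▸ ha
  · exact hm ▸ hb

end Matrix.IsHermitian

theorem Matrix.of_smul_one_add_smul_apply {ι R : Type*} [DecidableEq ι] [Semiring R]
    {f g : ι → ι → ι} (hfg : ∀ p q, f p q = g p q ↔ p = q) (a b : R) (N : Matrix ι ι R) :
    (of fun p q => (a • 1 + b • N) (f p q) (g p q)) =
      a • 1 + b • of fun p q => N (f p q) (g p q) := by
  ext p q
  simp [one_apply, hfg]

theorem Matrix.map_kronecker {R S : Type*} [NonAssocSemiring R] [NonAssocSemiring S] {l m n p : Type*} (f : R →+* S)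
    (A : Matrix l m R) (B : Matrix n p R) : (A ⊗ₖ B).map f = A.map f ⊗ₖ B.map f := by
  rw [kroneckerMap_map, kroneckerMap_map_left, kroneckerMap_map_right]
  simp only [map_mul]

abbrev ThreeQubits := Fin 2 × Fin 2 × Fin 2

section Pauli

variable (R : Type*) [Ring R]

def pauliX : Matrix (Fin 2) (Fin 2) R := !![0, 1; 1, 0]

def pauliZ : Matrix (Fin 2) (Fin 2) R := !![1, 0; 0, -1]

def bisepPauliSum : Matrix ThreeQubits ThreeQubits R :=
  let σ₀ : Matrix (Fin 2) (Fin 2) R := 1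
  let σ₁ := pauliX R
  let σ₃ := pauliZ R
  σ₀ ⊗ₖ (σ₃ ⊗ₖ σ₁) + σ₀ ⊗ₖ (σ₃ ⊗ₖ σ₃) + σ₁ ⊗ₖ (σ₀ ⊗ₖ σ₃) + σ₁ ⊗ₖ (σ₁ ⊗ₖ σ₁) +
    σ₁ ⊗ₖ (σ₃ ⊗ₖ σ₃) + σ₃ ⊗ₖ (σ₀ ⊗ₖ σ₃) + σ₃ ⊗ₖ (σ₁ ⊗ₖ σ₀) + σ₃ ⊗ₖ (σ₁ ⊗ₖ σ₃) +
    σ₃ ⊗ₖ (σ₃ ⊗ₖ σ₀) + σ₃ ⊗ₖ (σ₃ ⊗ₖ σ₁) - σ₀ ⊗ₖ (σ₁ ⊗ₖ σ₁) - σ₀ ⊗ₖ (σ₁ ⊗ₖ σ₃) -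
    σ₁ ⊗ₖ (σ₀ ⊗ₖ σ₁) - σ₁ ⊗ₖ (σ₁ ⊗ₖ σ₀) - σ₁ ⊗ₖ (σ₃ ⊗ₖ σ₀) - σ₃ ⊗ₖ (σ₀ ⊗ₖ σ₁)

variable {R} {S : Type*} [Ring S]

theorem pauliX_map (f : R →+* S) : (pauliX R).map f = pauliX S := by
  ext i j; fin_cases i <;> fin_cases j <;> simp [pauliX]

theorem pauliZ_map (f : R →+* S) : (pauliZ R).map f = pauliZ S := by
  ext i j; fin_cases i <;> fin_cases j <;> simp [pauliZ]

theorem bisepPauliSum_map (f : R →+* S) : (bisepPauliSum R).map f = bisepPauliSum S := by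
  simp only [bisepPauliSum, Matrix.map_add _ (map_add f), Matrix.map_sub _ (map_sub f),
    map_kronecker, pauliX_map, pauliZ_map, Matrix.map_one f f.map_zero f.map_one]

end Pauli

theorem bisepPauliSum_mul_self : bisepPauliSum ℂ * bisepPauliSum ℂ = (16 : ℂ) • 1 := by
  have h : bisepPauliSum ℤ * bisepPauliSum ℤ = 16 := by decide
  rw [← bisepPauliSum_map (Int.castRingHom ℂ), ← RingHom.mapMatrix_apply, ← map_mul, h, map_ofNat,
    ofNat_smul_eq_nsmul, nsmul_one, Nat.cast_ofNat]

theorem bisepPauliSum_isHermitian : (bisepPauliSum ℂ).IsHermitian := by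
  have h : (bisepPauliSum ℤ).IsHermitian := by decide
  rw [← bisepPauliSum_map (Int.castRingHom ℂ)]
  exact h.map _ fun z => by simp

theorem trace_bisepPauliSum : (bisepPauliSum ℂ).trace = 0 := by
  have h : (bisepPauliSum ℤ).trace = 0 := by decide
  rw [← bisepPauliSum_map (Int.castRingHom ℂ), ← AddMonoidHom.map_trace, h, map_zero]

theorem ofReal_sqrt_two_sq : ((Real.sqrt 2 : ℝ) : ℂ) ^ 2 = 2 := by
  rw [← Complex.ofReal_pow, Real.sq_sqrt zero_le_two]
  norm_num

theorem lam_zero : lam 0 = ((Real.sqrt 2 : ℂ))⁻¹ • 1 := by rw [lam, one_fin_two]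

theorem lam_one : lam 1 = ((Real.sqrt 2 : ℂ))⁻¹ • pauliX ℂ := rfl

theorem lam_three : lam 3 = ((Real.sqrt 2 : ℂ))⁻¹ • pauliZ ℂ := rfl

theorem rhoBisep_eq (x : ℝ) :
    rhoBisep x = ((1 / 8 : ℝ) : ℂ) • 1 + ((Real.sqrt 2 * x / 4 : ℝ) : ℂ) • bisepPauliSum ℂ := by
  simp only [rhoBisep, Lam3, lam_zero, lam_one, lam_three, smul_kronecker, kronecker_smul,
    smul_smul, one_kronecker_one, ← smul_add, ← smul_sub, bisepPauliSum]
  congr 2 <;> push_cast <;> field_simp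
  · linear_combination (-2 * ((Real.sqrt 2 : ℂ) ^ 2 + 2)) * ofReal_sqrt_two_sq
  · linear_combination (-(x : ℂ) * ((Real.sqrt 2 : ℂ) ^ 2 + 2)) * ofReal_sqrt_two_sq

/-- Each partial transpose `PTi` is, by definition, such an entrywise reindexing. -/
theorem of_rhoBisep_apply_eq {f g : ThreeQubits → ThreeQubits → ThreeQubits}
    (hfg : ∀ p q, f p q = g p q ↔ p = q)
    (hM : (of fun p q => bisepPauliSum ℤ (f p q) (g p q)) = bisepPauliSum ℤ) (x : ℝ) :
    (of fun p q => rhoBisep x (f p q) (g p q)) = rhoBisep x := by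
  have hMC : (of fun p q => bisepPauliSum ℂ (f p q) (g p q)) = bisepPauliSum ℂ := by
    rw [← bisepPauliSum_map (Int.castRingHom ℂ)]
    exact congrArg (fun M : Matrix ThreeQubits ThreeQubits ℤ => M.map (Int.castRingHom ℂ)) hM
  rw [rhoBisep_eq, of_smul_one_add_smul_apply hfg, hMC]

theorem PT1_rhoBisep (x : ℝ) : PT1 (rhoBisep x) = rhoBisep x :=
  of_rhoBisep_apply_eq (by decide) (by decide) x

theorem PT2_rhoBisep (x : ℝ) : PT2 (rhoBisep x) = rhoBisep x :=
  of_rhoBisep_apply_eq (by decide) (by decide) x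

theorem PT3_rhoBisep (x : ℝ) : PT3 (rhoBisep x) = rhoBisep x :=
  of_rhoBisep_apply_eq (by decide) (by decide) x

theorem rhoBisep_isHermitian (x : ℝ) : (rhoBisep x).IsHermitian := by
  rw [rhoBisep_eq]
  exact (isHermitian_one.smul (Complex.conj_ofReal _)).add
    (bisepPauliSum_isHermitian.smul (Complex.conj_ofReal _))

theorem trace_rhoBisep (x : ℝ) : (rhoBisep x).trace = 1 := by
  rw [rhoBisep_eq, trace_add, trace_smul, trace_smul, trace_bisepPauliSum, trace_one]
  norm_num

theorem trace_rhoBisep_mul_self (x : ℝ) :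
    (rhoBisep x * rhoBisep x).trace = 1 / 8 + 16 * (x : ℂ) ^ 2 := by
  rw [rhoBisep_eq]
  simp only [add_mul, mul_add, Matrix.smul_mul, Matrix.mul_smul, one_mul, mul_one,
    bisepPauliSum_mul_self, trace_add, trace_smul, trace_one, trace_bisepPauliSum,
    Fintype.card_prod, Fintype.card_fin, smul_eq_mul]
  push_cast
  linear_combination 8 * (x : ℂ) ^ 2 * ofReal_sqrt_two_sq

theorem rhoBisep_sub_mul_sub (x : ℝ) :
    (rhoBisep x - ((1 / 8 + Real.sqrt 2 * x : ℝ) : ℂ) • 1) *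
      (rhoBisep x - ((1 / 8 - Real.sqrt 2 * x : ℝ) : ℂ) • 1) = 0 := by
  rw [rhoBisep_eq]
  simp only [add_mul, mul_add, sub_mul, mul_sub, Matrix.smul_mul, Matrix.mul_smul, one_mul, mul_one,
    bisepPauliSum_mul_self]
  push_cast
  module

theorem charpoly_rhoBisep (x : ℝ) :
    (rhoBisep x).charpoly =
      (X - C ((1 / 8 + Real.sqrt 2 * x : ℝ) : ℂ)) ^ 4 *
        (X - C ((1 / 8 - Real.sqrt 2 * x : ℝ) : ℂ)) ^ 4 :=
  (rhoBisep_isHermitian x).charpoly_eq_of_mul_eq_zero (rhoBisep_sub_mul_sub x) (k := 4) (l := 4)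
    rfl (by rw [trace_rhoBisep]; push_cast; ring)

theorem rhoBisep_posSemidef_iff (x : ℝ) :
    (rhoBisep x).PosSemidef ↔ -(1 / (8 * Real.sqrt 2)) ≤ x ∧ x ≤ 1 / (8 * Real.sqrt 2) := by
  rw [(rhoBisep_isHermitian x).posSemidef_iff_of_mul_eq_zero (rhoBisep_sub_mul_sub x)
    (k := 4) (l := 4) rfl (by rw [trace_rhoBisep]; push_cast; ring) four_pos four_pos]
  have hs : 0 < Real.sqrt 2 := by positivity
  rw [neg_le, ← div_div, le_div_iff₀ hs, le_div_iff₀ hs]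
  constructor <;> rintro ⟨h1, h2⟩ <;> constructor <;> linarith

theorem stmt_16 (x : ℝ) :
    (rhoBisep x).IsHermitian ∧ (rhoBisep x).trace = 1 ∧
    (rhoBisep x * rhoBisep x).trace = 1 / 8 + (16 : ℂ) * (x : ℂ) ^ 2 ∧
    (rhoBisep x).charpoly =
      (X - C ((1 / 8 + Real.sqrt 2 * x : ℝ) : ℂ)) ^ 4 *
        (X - C ((1 / 8 - Real.sqrt 2 * x : ℝ) : ℂ)) ^ 4 ∧
    ((rhoBisep x).PosSemidef ↔ -(1 / (8 * Real.sqrt 2)) ≤ x ∧ x ≤ 1 / (8 * Real.sqrt 2)) ∧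
    PT1 (rhoBisep x) = rhoBisep x ∧ PT2 (rhoBisep x) = rhoBisep x ∧
    PT3 (rhoBisep x) = rhoBisep x ∧
    ((rhoBisep x).PosSemidef →
      (PT1 (rhoBisep x)).PosSemidef ∧ (PT2 (rhoBisep x)).PosSemidef ∧
        (PT3 (rhoBisep x)).PosSemidef) := by
  refine ⟨rhoBisep_isHermitian x, trace_rhoBisep x, trace_rhoBisep_mul_self x, charpoly_rhoBisep x,
    rhoBisep_posSemidef_iff x, PT1_rhoBisep x, PT2_rhoBisep x, PT3_rhoBisep x, fun h => ?_⟩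
  rw [PT1_rhoBisep, PT2_rhoBisep, PT3_rhoBisep]
  exact ⟨h, h, h⟩
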